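/- (Necessary condition for Lasso density evolution convergence.) Let the prior be π(s) = (k/n)·δ_{c₀}(s) + (1 − k/n)·δ_0(s) with c₀ > 0 and 0 < k < n, and let β = (n-independent) constant calibrated as β ≍ log(n/k). Define a₁ = Σ_{i,j} ρ_i λ_j √(i/j) and a₂ = Σ_{i,j} ρ_i λ_j (i/j) for probability vectors (ρ_i), (λ_j). If the density evolution recursion E^{(t+1)} = E_{π,z}[(prox(s + a₁z√{E^{(t)}}; βa₂V^{(t)}) − s)²], V^{(t+1)} = E_{π,z}[βa₂V^{(t)}·prox'(s + a₁z√{E^{(t)}}; βa₂V^{(t)})] converges to (0,0) from generic small initial conditions, then a₁² ≤ n/k and β a₂ ≤ n/k. -/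

import Mathlib

/-!
Near the fixed point `(0, 0)` the effective noise level `σ = a₁ √E` and the threshold
`b = β a₂ V` are both small compared with `c₀`, so on any fixed window `|z| ≤ M` the signal
coordinate `c₀ + σ z` stays in the linear regime of soft thresholding:
`prox (c₀ + σ z) b - c₀ = σ z - b` and `prox' = 1` there. Discarding every other (nonnegative)
contribution and using the symmetry of the Gaussian gives
`E' ≥ (k/n) a₁² E ∫_{|z| ≤ M} z²` and `V' ≥ (k/n) β a₂ V ℙ(|z| ≤ M)`.
If `a₁² > n/k` (resp. `β a₂ > n/k`), choose `M` so large that the factor is still at least `1`: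
along the orbit of `(1, 1)`, which stays positive, `E` (resp. `V`) is then eventually
nondecreasing and cannot tend to `0`. Positivity of the orbit needs `a₁ > 0`, which follows
from `a₂ > 0`.
-/

open Filter MeasureTheory ProbabilityTheory

/-- The soft-thresholding operator. -/
noncomputable def prox (x b : ℝ) : ℝ := Real.sign x * max (|x| - b) 0

/-- The (a.e.) derivative of soft thresholding in its first argument. -/
noncomputable def proxD (x b : ℝ) : ℝ := if b < |x| then 1 else 0

open Set Topology
open scoped NNReal

section Series

variable {ι : Type*}

lemma summable_of_tsum_ne_zero {f : ι → ℝ} (h : ∑' i, f i ≠ 0) : Summable f :=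
  not_not.1 fun hf => h (tsum_eq_zero_of_not_summable hf)

lemma exists_pos_of_tsum_pos {f : ι → ℝ} (h : 0 < ∑' i, f i) : ∃ i, 0 < f i := by
  by_contra! hf
  exact h.not_ge (tsum_nonpos hf)

lemma tsum_tsum_mul_sqrt_div_pos {ρ lam : ℕ → ℝ} (hρ : ∀ i, 0 ≤ ρ i) (hlam : ∀ j, 0 ≤ lam j)
    (hρs : Summable ρ) (hlams : Summable lam)
    (h : 0 < ∑' i, ∑' j, ρ i * lam j * ((i : ℝ) / j)) :
    0 < ∑' i, ∑' j, ρ i * lam j * √((i : ℝ) / j) := by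
  set f : ℕ × ℕ → ℝ := fun p => ρ p.1 * lam p.2 * ((p.1 : ℝ) / p.2)
  set g : ℕ × ℕ → ℝ := fun p => ρ p.1 * lam p.2 * √((p.1 : ℝ) / p.2)
  have hw : ∀ p : ℕ × ℕ, 0 ≤ ρ p.1 * lam p.2 := fun p => mul_nonneg (hρ p.1) (hlam p.2)
  have hf : 0 ≤ f := fun p => mul_nonneg (hw p) (by positivity)
  have hg : 0 ≤ g := fun p => mul_nonneg (hw p) (Real.sqrt_nonneg _)
  have hfs : Summable f := by
    refine (summable_prod_of_nonneg hf).2 ⟨fun i => ?_, summable_of_tsum_ne_zero h.ne'⟩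
    refine (hlams.mul_left (ρ i * i)).of_nonneg_of_le (fun j => hf (i, j)) fun j => ?_
    have hdiv : (i : ℝ) / j ≤ i := by
      rcases j.eq_zero_or_pos with rfl | hj
      · simp
      · exact div_le_self (Nat.cast_nonneg i) (by exact_mod_cast hj)
    calc ρ i * lam j * ((i : ℝ) / j) ≤ ρ i * lam j * i := by gcongr; exact hw (i, j)
      _ = ρ i * i * lam j := by ring
  have hgs : Summable g := by
    refine ((hρs.mul_of_nonneg hlams hρ hlam).add hfs).of_nonneg_of_le hg fun p => ?_
    have hx : (0 : ℝ) ≤ (p.1 : ℝ) / p.2 := by positivity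
    have hsqrt : √((p.1 : ℝ) / p.2) ≤ 1 + (p.1 : ℝ) / p.2 := by
      nlinarith [Real.sq_sqrt hx, Real.sqrt_nonneg ((p.1 : ℝ) / p.2)]
    calc g p ≤ ρ p.1 * lam p.2 * (1 + (p.1 : ℝ) / p.2) := mul_le_mul_of_nonneg_left hsqrt (hw p)
      _ = ρ p.1 * lam p.2 + f p := by ring
  obtain ⟨i, hi⟩ := exists_pos_of_tsum_pos h
  obtain ⟨j, hij⟩ := exists_pos_of_tsum_pos hi
  have hgij : 0 < g (i, j) := by
    have hw' : 0 < ρ i * lam j := (hw (i, j)).lt_of_ne fun h0 => by simp [← h0] at hij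
    have hx : (0 : ℝ) < (i : ℝ) / j := (by positivity : (0 : ℝ) ≤ (i : ℝ) / j).lt_of_ne
      fun h0 => by simp [← h0] at hij
    exact mul_pos hw' (Real.sqrt_pos.2 hx)
  rw [← hgs.tsum_prod' hgs.prod_factor]
  exact hgs.tsum_pos hg (i, j) hgij

end Series

lemma not_tendsto_zero_of_eventually_le_succ {u : ℕ → ℝ} (hpos : ∀ t, 0 < u t)
    (hmono : ∀ᶠ t in atTop, u t ≤ u (t + 1)) : ¬Tendsto u atTop (𝓝 0) := by
  intro hu
  obtain ⟨N, hN⟩ := eventually_atTop.1 hmono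
  have hmon : Monotone fun t => u (t + N) :=
    monotone_nat_of_le_succ fun t => by simpa [add_right_comm] using hN (t + N) (by omega)
  have hle : u N ≤ 0 := ge_of_tendsto (hu.comp (tendsto_add_atTop_nat N))
    (Eventually.of_forall fun t => by simpa using hmon (Nat.zero_le t))
  exact (hpos N).not_ge hle

section Gaussian

instance gaussianReal_zero_isNegInvariant (v : ℝ≥0) : (gaussianReal 0 v).IsNegInvariant :=
  ⟨by rw [Measure.neg]; simpa using gaussianReal_map_neg (μ := 0) (v := v)⟩

lemma integrable_sq_gaussianReal (μ : ℝ) (v : ℝ≥0) :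
    Integrable (fun x => x ^ 2) (gaussianReal μ v) :=
  (memLp_id_gaussianReal 2).integrable_sq

lemma integral_sq_gaussianReal_zero (v : ℝ≥0) : ∫ x, x ^ 2 ∂gaussianReal 0 v = v := by
  simpa [integral_id_gaussianReal] using
    (variance_eq_integral (X := id) (μ := gaussianReal 0 v) aemeasurable_id).symm.trans
      variance_id_gaussianReal

lemma setIntegral_abs_le_id_eq_zero {μ : Measure ℝ} [μ.IsNegInvariant] (M : ℝ) :
    ∫ z in {z | |z| ≤ M}, z ∂μ = 0 := by
  have hodd : ∀ z, {z : ℝ | |z| ≤ M}.indicator id (-z) = -{z : ℝ | |z| ≤ M}.indicator id z :=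
    fun z => by by_cases hz : |z| ≤ M <;> simp [indicator, hz]
  have h := integral_neg_eq_self ({z : ℝ | |z| ≤ M}.indicator id) μ
  simp only [hodd, integral_neg] at h
  rw [← integral_indicator (measurableSet_le measurable_abs measurable_const)]
  exact CharZero.eq_neg_self_iff.mp h.symm

lemma tendsto_setIntegral_abs_le {μ : Measure ℝ} {f : ℝ → ℝ} (hf : Integrable f μ) :
    Tendsto (fun M => ∫ z in {z | |z| ≤ M}, f z ∂μ) atTop (𝓝 (∫ z, f z ∂μ)) := by
  have hunion : ⋃ M : ℝ, {z : ℝ | |z| ≤ M} = univ :=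
    eq_univ_of_forall fun z => mem_iUnion.2 ⟨|z|, le_refl |z|⟩
  have h := tendsto_setIntegral_of_monotone (μ := μ) (f := f)
    (fun M => measurableSet_le measurable_abs measurable_const)
    (fun M M' hM z hz => le_trans hz hM) (by rw [hunion]; exact hf.integrableOn)
  rwa [hunion, setIntegral_univ] at h

lemma integral_pos_of_pos_on_Ioi_gaussianReal {m : ℝ} {v : ℝ≥0} (hv : v ≠ 0) {f : ℝ → ℝ}
    (hf : 0 ≤ f) (hfi : Integrable f (gaussianReal m v)) {a : ℝ} (h : ∀ z, a < z → 0 < f z) :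
    0 < ∫ z, f z ∂gaussianReal m v := by
  have hIoi : 0 < gaussianReal m v (Ioi a) :=
    pos_iff_ne_zero.2 fun h0 => by simpa using gaussianReal_absolutelyContinuous' m hv h0
  exact (integral_pos_iff_support_of_nonneg hf hfi).2
    (hIoi.trans_le (measure_mono fun z hz => (h z hz).ne'))

end Gaussian

section Prox

lemma Real.measurable_sign : Measurable Real.sign :=
  Measurable.ite (measurableSet_lt measurable_id measurable_const) measurable_const <|
    Measurable.ite (measurableSet_lt measurable_const measurable_id) measurable_const
      measurable_const

lemma measurable_prox (b : ℝ) : Measurable (prox · b) :=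
  Real.measurable_sign.mul ((measurable_id.abs.sub_const b).max measurable_const)

lemma measurable_proxD (b : ℝ) : Measurable (proxD · b) :=
  Measurable.ite (measurableSet_lt measurable_const measurable_abs) measurable_const
    measurable_const

lemma prox_of_lt {x b : ℝ} (hb : 0 ≤ b) (h : b < x) : prox x b = x - b := by
  have hx : 0 < x := hb.trans_lt h
  rw [prox, Real.sign_of_pos hx, abs_of_pos hx, one_mul, max_eq_left (by linarith)]

lemma sq_prox_le {x b : ℝ} (hb : 0 ≤ b) : prox x b ^ 2 ≤ x ^ 2 := by
  have hsign : Real.sign x ^ 2 ≤ 1 := by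
    rcases Real.sign_apply_eq x with h | h | h <;> simp [h]
  have hmax : max (|x| - b) 0 ^ 2 ≤ x ^ 2 := by
    rw [← sq_abs x]
    exact pow_le_pow_left₀ (le_max_right _ _) (max_le (by linarith) (abs_nonneg x)) 2
  rw [prox, mul_pow]
  nlinarith [sq_nonneg (max (|x| - b) 0)]

lemma proxD_nonneg (x b : ℝ) : 0 ≤ proxD x b := by
  unfold proxD; split_ifs <;> norm_num

lemma proxD_le_one (x b : ℝ) : proxD x b ≤ 1 := by
  unfold proxD; split_ifs <;> norm_num

lemma proxD_of_lt {x b : ℝ} (h : b < |x|) : proxD x b = 1 := if_pos h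

end Prox

section OneStep

variable {μ : Measure ℝ} {c σ b : ℝ}

lemma integrable_sq_prox_sub [IsFiniteMeasure μ] (hμ : Integrable (fun z => z ^ 2) μ)
    (hb : 0 ≤ b) : Integrable (fun z => (prox (c + σ * z) b - c) ^ 2) μ := by
  refine ((integrable_const (6 * c ^ 2)).add (hμ.const_mul (4 * σ ^ 2))).mono'
    (((measurable_prox b).comp (by fun_prop)).sub_const c |>.pow_const 2).aestronglyMeasurable
    (Eventually.of_forall fun z => ?_)
  have h := sq_prox_le (x := c + σ * z) hb
  rw [Real.norm_eq_abs, abs_of_nonneg (sq_nonneg _), Pi.add_apply]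
  nlinarith [sq_nonneg (prox (c + σ * z) b + c), sq_nonneg (c - σ * z)]

lemma integrable_proxD [IsFiniteMeasure μ] : Integrable (fun z => proxD (c + σ * z) b) μ :=
  .of_bound ((measurable_proxD b).comp (by fun_prop)).aestronglyMeasurable 1
    (Eventually.of_forall fun z => by
      rw [Real.norm_eq_abs, abs_of_nonneg (proxD_nonneg _ _)]; exact proxD_le_one _ _)

lemma lt_add_mul_of_abs_le {z M : ℝ} (hσ : 0 ≤ σ) (h : b + σ * M < c) (hz : |z| ≤ M) :
    b < c + σ * z := by
  nlinarith [neg_abs_le z]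

lemma mul_setIntegral_sq_le_integral_sq_prox_sub [IsFiniteMeasure μ] [μ.IsNegInvariant]
    (hμ : Integrable (fun z => z ^ 2) μ) {M : ℝ} (hσ : 0 ≤ σ) (hb : 0 ≤ b)
    (h : b + σ * M < c) :
    σ ^ 2 * ∫ z in {z | |z| ≤ M}, z ^ 2 ∂μ ≤ ∫ z, (prox (c + σ * z) b - c) ^ 2 ∂μ := by
  have hS : MeasurableSet {z : ℝ | |z| ≤ M} := measurableSet_le measurable_abs measurable_const
  have hμ1 : Integrable (fun z : ℝ => z) μ := (memLp_two_iff_integrable_sq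
    measurable_id.aestronglyMeasurable).2 hμ |>.integrable one_le_two
  -- the cross term `2σbz` integrates to `0` over the symmetric window
  have hlin : ∀ z ∈ {z : ℝ | |z| ≤ M},
      σ ^ 2 * z ^ 2 - 2 * σ * b * z ≤ (prox (c + σ * z) b - c) ^ 2 := fun z hz => by
    rw [prox_of_lt hb (lt_add_mul_of_abs_le hσ h hz)]
    nlinarith [sq_nonneg b]
  calc σ ^ 2 * ∫ z in {z | |z| ≤ M}, z ^ 2 ∂μ
      = ∫ z in {z | |z| ≤ M}, (σ ^ 2 * z ^ 2 - 2 * σ * b * z) ∂μ := by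
        rw [integral_sub (hμ.const_mul _).integrableOn (hμ1.const_mul _).integrableOn,
          integral_const_mul, integral_const_mul, setIntegral_abs_le_id_eq_zero, mul_zero,
          sub_zero]
    _ ≤ ∫ z in {z | |z| ≤ M}, (prox (c + σ * z) b - c) ^ 2 ∂μ :=
        setIntegral_mono_on ((hμ.const_mul _).sub (hμ1.const_mul _)).integrableOn
          (integrable_sq_prox_sub hμ hb).integrableOn hS hlin
    _ ≤ ∫ z, (prox (c + σ * z) b - c) ^ 2 ∂μ :=
        setIntegral_le_integral (integrable_sq_prox_sub hμ hb)
          (Eventually.of_forall fun _ => sq_nonneg _)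

lemma measureReal_abs_le_le_integral_proxD [IsFiniteMeasure μ] {M : ℝ} (hσ : 0 ≤ σ)
    (h : b + σ * M < c) : μ.real {z | |z| ≤ M} ≤ ∫ z, proxD (c + σ * z) b ∂μ := by
  have hS : MeasurableSet {z : ℝ | |z| ≤ M} := measurableSet_le measurable_abs measurable_const
  calc μ.real {z | |z| ≤ M} = ∫ z in {z | |z| ≤ M}, proxD (c + σ * z) b ∂μ := by
        rw [setIntegral_congr_fun hS fun z hz =>
          proxD_of_lt ((lt_add_mul_of_abs_le hσ h hz).trans_le (le_abs_self _)),
          setIntegral_const, smul_eq_mul, mul_one]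
    _ ≤ ∫ z, proxD (c + σ * z) b ∂μ :=
        setIntegral_le_integral integrable_proxD (Eventually.of_forall fun _ => proxD_nonneg _ _)

lemma lt_add_mul_of_div_lt {z : ℝ} (hc : 0 ≤ c) (hσ : 0 < σ) (hz : b / σ < z) :
    b < c + σ * z := by
  linarith [(div_lt_iff₀' hσ).1 hz]

lemma integral_sq_prox_sub_pos (hc : 0 ≤ c) (hσ : 0 < σ) (hb : 0 ≤ b) :
    0 < ∫ z, (prox (c + σ * z) b - c) ^ 2 ∂gaussianReal 0 1 :=
  integral_pos_of_pos_on_Ioi_gaussianReal one_ne_zero (fun _ => sq_nonneg _)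
    (integrable_sq_prox_sub (integrable_sq_gaussianReal 0 1) hb) (a := b / σ) fun z hz => by
      have hlt := (div_lt_iff₀' hσ).1 hz
      rw [prox_of_lt hb (lt_add_mul_of_div_lt hc hσ hz)]
      nlinarith

lemma integral_proxD_pos (hc : 0 ≤ c) (hσ : 0 < σ) :
    0 < ∫ z, proxD (c + σ * z) b ∂gaussianReal 0 1 :=
  integral_pos_of_pos_on_Ioi_gaussianReal one_ne_zero (fun _ => proxD_nonneg _ _) integrable_proxD
    (a := b / σ) fun z hz => by
      rw [proxD_of_lt ((lt_add_mul_of_div_lt hc hσ hz).trans_le (le_abs_self _))]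
      exact one_pos

end OneStep

section DensityEvolution

/-- The map `(E, V) ↦ (E', V')` of the recursion, with `κ = k/n`, `a = a₁` and `θ = β a₂`. -/
noncomputable def deStep (κ c₀ a θ : ℝ) (p : ℝ × ℝ) : ℝ × ℝ :=
  (κ * ∫ z, (prox (c₀ + a * z * √p.1) (θ * p.2) - c₀) ^ 2 ∂gaussianReal 0 1 +
      (1 - κ) * ∫ z, (prox (a * z * √p.1) (θ * p.2)) ^ 2 ∂gaussianReal 0 1,
    κ * ∫ z, θ * p.2 * proxD (c₀ + a * z * √p.1) (θ * p.2) ∂gaussianReal 0 1 +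
      (1 - κ) * ∫ z, θ * p.2 * proxD (a * z * √p.1) (θ * p.2) ∂gaussianReal 0 1)

noncomputable def deOrbit (κ c₀ a θ : ℝ) (t : ℕ) : ℝ × ℝ := (deStep κ c₀ a θ)^[t] (1, 1)

variable {κ c₀ a θ M : ℝ} {p : ℝ × ℝ}

lemma deOrbit_succ (t : ℕ) :
    deOrbit κ c₀ a θ (t + 1) = deStep κ c₀ a θ (deOrbit κ c₀ a θ t) :=
  Function.iterate_succ_apply' _ _ _

lemma deStep_snd_nonneg (hκ : 0 ≤ κ) (hκ1 : κ ≤ 1) (hb : 0 ≤ θ * p.2) :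
    0 ≤ (deStep κ c₀ a θ p).2 :=
  add_nonneg (mul_nonneg hκ (integral_nonneg fun _ => mul_nonneg hb (proxD_nonneg _ _)))
    (mul_nonneg (sub_nonneg.2 hκ1) (integral_nonneg fun _ => mul_nonneg hb (proxD_nonneg _ _)))

lemma deStep_fst_pos (hκ : 0 < κ) (hκ1 : κ ≤ 1) (hc₀ : 0 ≤ c₀) (ha : 0 < a) (hE : 0 < p.1)
    (hb : 0 ≤ θ * p.2) : 0 < (deStep κ c₀ a θ p).1 := by
  have hsignal := integral_sq_prox_sub_pos hc₀ (mul_pos ha (Real.sqrt_pos.2 hE)) hb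
  simp only [deStep, mul_right_comm a _ √p.1]
  exact add_pos_of_pos_of_nonneg (mul_pos hκ hsignal)
    (mul_nonneg (sub_nonneg.2 hκ1) (integral_nonneg fun _ => sq_nonneg _))

lemma deStep_snd_pos (hκ : 0 < κ) (hκ1 : κ ≤ 1) (hc₀ : 0 ≤ c₀) (ha : 0 < a) (hE : 0 < p.1)
    (hb : 0 < θ * p.2) : 0 < (deStep κ c₀ a θ p).2 := by
  have hsignal := integral_proxD_pos (b := θ * p.2) hc₀ (mul_pos ha (Real.sqrt_pos.2 hE))
  simp only [deStep, integral_const_mul, mul_right_comm a _ √p.1]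
  exact add_pos_of_pos_of_nonneg (mul_pos hκ (mul_pos hb hsignal))
    (mul_nonneg (sub_nonneg.2 hκ1) (mul_nonneg hb.le (integral_nonneg fun _ => proxD_nonneg _ _)))

lemma le_deStep_fst (hκ : 0 ≤ κ) (hκ1 : κ ≤ 1) (ha : 0 ≤ a) (hE : 0 ≤ p.1)
    (hb : 0 ≤ θ * p.2) (hsmall : θ * p.2 + a * √p.1 * M < c₀) :
    κ * (a ^ 2 * p.1) * ∫ z in {z | |z| ≤ M}, z ^ 2 ∂gaussianReal 0 1 ≤
      (deStep κ c₀ a θ p).1 := by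
  have hsignal := mul_setIntegral_sq_le_integral_sq_prox_sub (integrable_sq_gaussianReal 0 1)
    (mul_nonneg ha (Real.sqrt_nonneg p.1)) hb hsmall
  rw [mul_pow, Real.sq_sqrt hE] at hsignal
  simp only [deStep, mul_right_comm a _ √p.1]
  rw [mul_assoc κ]
  exact le_add_of_le_of_nonneg (mul_le_mul_of_nonneg_left hsignal hκ)
    (mul_nonneg (sub_nonneg.2 hκ1) (integral_nonneg fun _ => sq_nonneg _))

lemma le_deStep_snd (hκ : 0 ≤ κ) (hκ1 : κ ≤ 1) (ha : 0 ≤ a) (hb : 0 ≤ θ * p.2)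
    (hsmall : θ * p.2 + a * √p.1 * M < c₀) :
    κ * (θ * p.2) * (gaussianReal 0 1).real {z | |z| ≤ M} ≤ (deStep κ c₀ a θ p).2 := by
  have hsignal := measureReal_abs_le_le_integral_proxD (μ := gaussianReal 0 1)
    (mul_nonneg ha (Real.sqrt_nonneg p.1)) hsmall
  simp only [deStep, integral_const_mul, mul_right_comm a _ √p.1]
  rw [mul_assoc κ]
  exact le_add_of_le_of_nonneg (mul_le_mul_of_nonneg_left (mul_le_mul_of_nonneg_left hsignal hb) hκ)
    (mul_nonneg (sub_nonneg.2 hκ1) (mul_nonneg hb (integral_nonneg fun _ => proxD_nonneg _ _)))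

lemma deOrbit_snd_nonneg (hκ : 0 ≤ κ) (hκ1 : κ ≤ 1) (hθ : 0 ≤ θ) (t : ℕ) :
    0 ≤ (deOrbit κ c₀ a θ t).2 := by
  induction t with
  | zero => exact zero_le_one
  | succ t ih => rw [deOrbit_succ]; exact deStep_snd_nonneg hκ hκ1 (mul_nonneg hθ ih)

lemma deOrbit_fst_pos (hκ : 0 < κ) (hκ1 : κ ≤ 1) (hc₀ : 0 ≤ c₀) (ha : 0 < a) (hθ : 0 ≤ θ)
    (t : ℕ) : 0 < (deOrbit κ c₀ a θ t).1 := by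
  induction t with
  | zero => exact one_pos
  | succ t ih =>
    rw [deOrbit_succ]
    exact deStep_fst_pos hκ hκ1 hc₀ ha ih (mul_nonneg hθ (deOrbit_snd_nonneg hκ.le hκ1 hθ t))

lemma deOrbit_snd_pos (hκ : 0 < κ) (hκ1 : κ ≤ 1) (hc₀ : 0 ≤ c₀) (ha : 0 < a) (hθ : 0 < θ)
    (t : ℕ) : 0 < (deOrbit κ c₀ a θ t).2 := by
  induction t with
  | zero => exact one_pos
  | succ t ih =>
    rw [deOrbit_succ]
    exact deStep_snd_pos hκ hκ1 hc₀ ha (deOrbit_fst_pos hκ hκ1 hc₀ ha hθ.le t) (mul_pos hθ ih)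

lemma eventually_mul_add_mul_sqrt_mul_lt {E V : ℕ → ℝ} (hE : Tendsto E atTop (𝓝 0))
    (hV : Tendsto V atTop (𝓝 0)) (hc₀ : 0 < c₀) :
    ∀ᶠ t in atTop, θ * V t + a * √(E t) * M < c₀ := by
  have h : Tendsto (fun t => θ * V t + a * √(E t) * M) atTop (𝓝 0) := by
    simpa using (hV.const_mul θ).add ((hE.sqrt.const_mul a).mul_const M)
  exact h.eventually (eventually_lt_nhds hc₀)

lemma mul_sq_le_one_of_tendsto_deOrbit (hκ : 0 < κ) (hκ1 : κ ≤ 1) (hc₀ : 0 < c₀) (ha : 0 ≤ a)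
    (hθ : 0 ≤ θ) (hE : Tendsto (fun t => (deOrbit κ c₀ a θ t).1) atTop (𝓝 0))
    (hV : Tendsto (fun t => (deOrbit κ c₀ a θ t).2) atTop (𝓝 0)) : κ * a ^ 2 ≤ 1 := by
  by_contra! h
  have ha' : 0 < a := ha.lt_of_ne fun h0 => by simp [← h0] at h; linarith
  obtain ⟨M, hM⟩ : ∃ M, 1 ≤ κ * a ^ 2 * ∫ z in {z | |z| ≤ M}, z ^ 2 ∂gaussianReal 0 1 := by
    have hlim := (tendsto_setIntegral_abs_le (integrable_sq_gaussianReal 0 1)).const_mul (κ * a ^ 2)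
    rw [integral_sq_gaussianReal_zero, NNReal.coe_one, mul_one] at hlim
    exact ((hlim.eventually (eventually_gt_nhds h)).exists).imp fun _ => le_of_lt
  refine not_tendsto_zero_of_eventually_le_succ (deOrbit_fst_pos hκ hκ1 hc₀.le ha' hθ) ?_ hE
  filter_upwards [eventually_mul_add_mul_sqrt_mul_lt (θ := θ) (a := a) (M := M) hE hV hc₀]
    with t hsmall
  have hEt := deOrbit_fst_pos hκ hκ1 hc₀.le ha' hθ t
  rw [deOrbit_succ]
  calc (deOrbit κ c₀ a θ t).1
      ≤ κ * a ^ 2 * (∫ z in {z | |z| ≤ M}, z ^ 2 ∂gaussianReal 0 1) * (deOrbit κ c₀ a θ t).1 :=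
        le_mul_of_one_le_left hEt.le hM
    _ = κ * (a ^ 2 * (deOrbit κ c₀ a θ t).1) * ∫ z in {z | |z| ≤ M}, z ^ 2 ∂gaussianReal 0 1 := by
        ring
    _ ≤ _ := le_deStep_fst hκ.le hκ1 ha hEt.le (mul_nonneg hθ (deOrbit_snd_nonneg hκ.le hκ1 hθ t))
        hsmall

lemma mul_le_one_of_tendsto_deOrbit (hκ : 0 < κ) (hκ1 : κ ≤ 1) (hc₀ : 0 < c₀) (ha : 0 < a)
    (hθ : 0 < θ) (hE : Tendsto (fun t => (deOrbit κ c₀ a θ t).1) atTop (𝓝 0))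
    (hV : Tendsto (fun t => (deOrbit κ c₀ a θ t).2) atTop (𝓝 0)) : κ * θ ≤ 1 := by
  by_contra! h
  obtain ⟨M, hM⟩ : ∃ M, 1 ≤ κ * θ * (gaussianReal 0 1).real {z | |z| ≤ M} := by
    have hlim := (tendsto_setIntegral_abs_le (μ := gaussianReal 0 1)
      (integrable_const (1 : ℝ))).const_mul (κ * θ)
    simp only [integral_const, measureReal_restrict_apply_univ, smul_eq_mul, mul_one,
      probReal_univ] at hlim
    exact ((hlim.eventually (eventually_gt_nhds h)).exists).imp fun _ => le_of_lt
  refine not_tendsto_zero_of_eventually_le_succ (deOrbit_snd_pos hκ hκ1 hc₀.le ha hθ) ?_ hV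
  filter_upwards [eventually_mul_add_mul_sqrt_mul_lt (θ := θ) (a := a) (M := M) hE hV hc₀]
    with t hsmall
  have hVt := deOrbit_snd_pos hκ hκ1 hc₀.le ha hθ t
  rw [deOrbit_succ]
  calc (deOrbit κ c₀ a θ t).2
      ≤ κ * θ * (gaussianReal 0 1).real {z | |z| ≤ M} * (deOrbit κ c₀ a θ t).2 :=
        le_mul_of_one_le_left hVt.le hM
    _ = κ * (θ * (deOrbit κ c₀ a θ t).2) * (gaussianReal 0 1).real {z | |z| ≤ M} := by ring
    _ ≤ _ := le_deStep_snd hκ.le hκ1 ha.le (mul_pos hθ hVt).le hsmall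

end DensityEvolution

theorem lasso_de_necessary_condition_general
    (k n c₀ β : ℝ) (hk : 0 < k) (hkn : k < n) (hc₀ : 0 < c₀) (hβ : 0 < β)
    (ρ lam : ℕ → ℝ) (hρ : ∀ i, 0 ≤ ρ i) (hlam : ∀ j, 0 ≤ lam j)
    (hρsum : ∑' i, ρ i = 1) (hlamsum : ∑' j, lam j = 1)
    (a₁ a₂ : ℝ)
    (ha₁ : a₁ = ∑' i, ∑' j, ρ i * lam j * Real.sqrt ((i : ℝ) / (j : ℝ)))
    (ha₂ : a₂ = ∑' i, ∑' j, ρ i * lam j * ((i : ℝ) / (j : ℝ)))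
    (hconv : ∀ E V : ℕ → ℝ, 0 < E 0 → 0 < V 0 →
      (∀ t, E (t + 1) =
        (k / n) *
          ∫ z, (prox (c₀ + a₁ * z * Real.sqrt (E t)) (β * a₂ * V t) - c₀) ^ 2
            ∂(gaussianReal 0 1) +
        (1 - k / n) *
          ∫ z, (prox (a₁ * z * Real.sqrt (E t)) (β * a₂ * V t)) ^ 2
            ∂(gaussianReal 0 1)) →
      (∀ t, V (t + 1) =
        (k / n) *
          ∫ z, β * a₂ * V t * proxD (c₀ + a₁ * z * Real.sqrt (E t)) (β * a₂ * V t)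
            ∂(gaussianReal 0 1) +
        (1 - k / n) *
          ∫ z, β * a₂ * V t * proxD (a₁ * z * Real.sqrt (E t)) (β * a₂ * V t)
            ∂(gaussianReal 0 1)) →
      Tendsto E atTop (nhds 0) ∧ Tendsto V atTop (nhds 0)) :
    a₁ ^ 2 ≤ n / k ∧ β * a₂ ≤ n / k := by
  have hn : 0 < n := hk.trans hkn
  have hκ : 0 < k / n := div_pos hk hn
  have hκ1 : k / n ≤ 1 := (div_le_one hn).2 hkn.le
  have hle_iff : ∀ x, k / n * x ≤ 1 ↔ x ≤ n / k := fun x => by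
    rw [div_mul_eq_mul_div, div_le_one hn, le_div_iff₀ hk, mul_comm]
  have ha₁0 : 0 ≤ a₁ := ha₁ ▸ tsum_nonneg fun i => tsum_nonneg fun j =>
    mul_nonneg (mul_nonneg (hρ i) (hlam j)) (Real.sqrt_nonneg _)
  have ha₂0 : 0 ≤ a₂ := ha₂ ▸ tsum_nonneg fun i => tsum_nonneg fun j =>
    mul_nonneg (mul_nonneg (hρ i) (hlam j)) (by positivity)
  obtain ⟨hE, hV⟩ := hconv (fun t => (deOrbit (k / n) c₀ a₁ (β * a₂) t).1)
    (fun t => (deOrbit (k / n) c₀ a₁ (β * a₂) t).2) one_pos one_pos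
    (fun t => by rw [deOrbit_succ]; rfl) (fun t => by rw [deOrbit_succ]; rfl)
  refine ⟨(hle_iff _).1
    (mul_sq_le_one_of_tendsto_deOrbit hκ hκ1 hc₀ ha₁0 (by positivity) hE hV), ?_⟩
  rcases (mul_nonneg hβ.le ha₂0).eq_or_lt with hzero | hθ
  · rw [← hzero]; positivity
  have ha₁pos : 0 < a₁ := ha₁ ▸ tsum_tsum_mul_sqrt_div_pos hρ hlam
    (summable_of_tsum_ne_zero (by simp [hρsum])) (summable_of_tsum_ne_zero (by simp [hlamsum]))
    (ha₂ ▸ pos_of_mul_pos_right hθ hβ.le)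
  exact (hle_iff _).1 (mul_le_one_of_tendsto_deOrbit hκ hκ1 hc₀ ha₁pos hθ hE hV)

/-- Necessary condition for convergence of the Lasso density evolution with the
two-point prior `π = (k/n) δ_{c₀} + (1 − k/n) δ_0`: if the recursion converges to
`(0,0)` from all (generic small) positive initial conditions, then `a₁² ≤ n/k` and
`β a₂ ≤ n/k`. -/
theorem lasso_de_necessary_condition
    (k n c₀ β : ℝ) (hk : 0 < k) (hkn : k < n) (hc₀ : 0 < c₀) (hβ : 0 < β)
    (ρ lam : ℕ → ℝ) (hρ : ∀ i, 0 ≤ ρ i) (hlam : ∀ j, 0 ≤ lam j)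
    (hρ0 : ρ 0 = 0) (hρ1 : ρ 1 = 0) (hlam0 : lam 0 = 0) (hlam1 : lam 1 = 0)
    (hρsum : ∑' i, ρ i = 1) (hlamsum : ∑' j, lam j = 1)
    (a₁ a₂ : ℝ)
    (ha₁ : a₁ = ∑' i, ∑' j, ρ i * lam j * Real.sqrt ((i : ℝ) / (j : ℝ)))
    (ha₂ : a₂ = ∑' i, ∑' j, ρ i * lam j * ((i : ℝ) / (j : ℝ)))
    (hconv : ∀ E V : ℕ → ℝ, 0 < E 0 → 0 < V 0 →
      (∀ t, E (t + 1) =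
        (k / n) *
          ∫ z, (prox (c₀ + a₁ * z * Real.sqrt (E t)) (β * a₂ * V t) - c₀) ^ 2
            ∂(gaussianReal 0 1) +
        (1 - k / n) *
          ∫ z, (prox (a₁ * z * Real.sqrt (E t)) (β * a₂ * V t)) ^ 2
            ∂(gaussianReal 0 1)) →
      (∀ t, V (t + 1) =
        (k / n) *
          ∫ z, β * a₂ * V t * proxD (c₀ + a₁ * z * Real.sqrt (E t)) (β * a₂ * V t)
            ∂(gaussianReal 0 1) +
        (1 - k / n) *
          ∫ z, β * a₂ * V t * proxD (a₁ * z * Real.sqrt (E t)) (β * a₂ * V t)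
            ∂(gaussianReal 0 1)) →
      Tendsto E atTop (nhds 0) ∧ Tendsto V atTop (nhds 0)) :
    a₁ ^ 2 ≤ n / k ∧ β * a₂ ≤ n / k :=
  lasso_de_necessary_condition_general k n c₀ β hk hkn hc₀ hβ ρ lam hρ hlam hρsum hlamsum a₁ a₂ ha₁
    ha₂ hconv
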